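/- arXiv:2302.02334 — 4 statements merged into one kernel-verified Lean document; each statement's English description precedes it below -/
import Mathlib

section
/- The minimum over probability vectors p in the K-simplex with p_{y_{max}} - p_{\hat{y}} = t (where y_{max} \ne \hat{y} are two fixed distinct indices and p_{y_{max}} = \max_y p_y) of the quantity -(p_{y_{max}} + p_{\hat{y}}) \log((p_{y_{max}} + p_{\hat{y}})/2) + p_{y_{max}} \log(p_{y_{max}}) + p_{\hat{y}} \log(p_{\hat{y}}) equals (1+t)/2 \cdot \log(1+t) + (1-t)/2 \cdot \log(1-t). -/
/-!
Write the two coordinates as `p i = m + c`, `p j = m - c` with `c = t / 2` fixed and `m` their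
mean. The quantity becomes `(m + c) log (m + c) + (m - c) log (m - c) - 2 m log m`, whose
derivative in `m` is `log (m + c) + log (m - c) - 2 log m ≤ 0` since `(m + c)(m - c) ≤ m²`.
It is therefore antitone in `m`, and `p i + p j ≤ 1` forces `m ≤ 1/2`: the minimum is attained
when all the mass sits on `i` and `j`, i.e. at `p i = (1 + t) / 2`, `p j = (1 - t) / 2`.
-/

open Real Set

noncomputable def pairGap (a b : ℝ) : ℝ :=
  -(a + b) * log ((a + b) / 2) + a * log a + b * log b

lemma pairGap_add_sub (m c : ℝ) :
    pairGap (m + c) (m - c) = (m + c) * log (m + c) + (m - c) * log (m - c) - 2 * (m * log m) := by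
  rw [pairGap, show (m + c + (m - c)) = 2 * m by ring, mul_div_cancel_left₀ m two_ne_zero]
  ring

lemma hasDerivAt_pairGap_add_sub {c m : ℝ} (hc : 0 ≤ c) (hcm : c < m) :
    HasDerivAt (fun x => pairGap (x + c) (x - c)) (log (m + c) + log (m - c) - 2 * log m) m := by
  simp only [pairGap_add_sub]
  have hplus : HasDerivAt (fun x => (x + c) * log (x + c)) (log (m + c) + 1) m :=
    (hasDerivAt_mul_log (by linarith)).comp_add_const m c
  have hminus : HasDerivAt (fun x => (x - c) * log (x - c)) (log (m - c) + 1) m :=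
    (hasDerivAt_mul_log (by linarith)).comp_sub_const m c
  exact ((hplus.add hminus).sub ((hasDerivAt_mul_log (by linarith)).const_mul 2)).congr_deriv
    (by ring)

lemma antitoneOn_pairGap_add_sub {c : ℝ} (hc : 0 ≤ c) :
    AntitoneOn (fun m => pairGap (m + c) (m - c)) (Ici c) := by
  refine antitoneOn_of_hasDerivWithinAt_nonpos (convex_Ici c)
    (f' := fun m => log (m + c) + log (m - c) - 2 * log m) (by simp only [pairGap_add_sub]; fun_prop) (fun m hm => ?_) (fun m hm => ?_)
  all_goals rw [interior_Ici, mem_Ioi] at hm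
  · exact (hasDerivAt_pairGap_add_sub hc hm).hasDerivWithinAt
  · have hm0 : 0 < m := hc.trans_lt hm
    have hmc : 0 < m - c := sub_pos.mpr hm
    have hlog : log (m + c) + log (m - c) ≤ 2 * log m := by
      rw [← log_mul (by linarith) hmc.ne', two_mul, ← log_mul hm0.ne' hm0.ne']
      exact log_le_log (by positivity) (by nlinarith)
    linarith

lemma pairGap_le_of_add_le_one {a b : ℝ} (hb : 0 ≤ b) (hba : b ≤ a) (hab : a + b ≤ 1) :
    pairGap ((1 + (a - b)) / 2) ((1 - (a - b)) / 2) ≤ pairGap a b := by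
  have h := antitoneOn_pairGap_add_sub (c := (a - b) / 2) (by linarith)
    (show (a - b) / 2 ≤ (a + b) / 2 by linarith) (show (a - b) / 2 ≤ 1 / 2 by linarith)
    (by linarith : (a + b) / 2 ≤ 1 / 2)
  beta_reduce at h
  convert h using 1 <;> congr 1 <;> ring

lemma half_mul_log_half (x : ℝ) : x / 2 * log (x / 2) = x / 2 * log x - x / 2 * log 2 := by
  rcases eq_or_ne x 0 with rfl | hx
  · simp
  · rw [log_div hx two_ne_zero]; ring

lemma pairGap_one_add_one_sub (t : ℝ) :
    pairGap ((1 + t) / 2) ((1 - t) / 2) = (1 + t) / 2 * log (1 + t) + (1 - t) / 2 * log (1 - t) := by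
  rw [pairGap, show (1 + t) / 2 + (1 - t) / 2 = 1 by ring, half_mul_log_half, half_mul_log_half,
    one_div, log_inv]
  ring

lemma single_add_single_apply_mem_Icc {ι : Type*} [DecidableEq ι] {i j : ι} (hij : i ≠ j)
    {a b : ℝ} (hb : 0 ≤ b) (hba : b ≤ a) (k : ι) :
    (Pi.single i a + Pi.single j b : ι → ℝ) k ∈ Icc 0 a := by
  rcases eq_or_ne k i with rfl | hki
  · simp [hij]
    linarith
  rcases eq_or_ne k j with rfl | hkj
  · simpa [hki] using ⟨hb, hba⟩
  · simpa [hki, hkj] using hb.trans hba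

theorem min_transform_eq_general (K : ℕ) (i j : Fin K) (hij : i ≠ j)
    (t : ℝ) (ht0 : 0 ≤ t) (ht1 : t ≤ 1) :
    IsLeast
      ((fun p : Fin K → ℝ =>
          -(p i + p j) * Real.log ((p i + p j) / 2)
            + p i * Real.log (p i) + p j * Real.log (p j)) ''
        {p : Fin K → ℝ | (∀ k, 0 ≤ p k) ∧ ∑ k, p k = 1 ∧ (∀ k, p k ≤ p i) ∧ p i - p j = t})
      ((1 + t) / 2 * Real.log (1 + t) + (1 - t) / 2 * Real.log (1 - t)) := by
  constructor
  · set q : Fin K → ℝ := Pi.single i ((1 + t) / 2) + Pi.single j ((1 - t) / 2)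
    have hqi : q i = (1 + t) / 2 := by simp [q, hij]
    have hqj : q j = (1 - t) / 2 := by simp [q, hij.symm]
    have hq := single_add_single_apply_mem_Icc hij (a := (1 + t) / 2) (b := (1 - t) / 2)
      (by linarith) (by linarith)
    refine ⟨q, ⟨fun k => (hq k).1, ?_, fun k => hqi ▸ (hq k).2, by rw [hqi, hqj]; ring⟩, ?_⟩
    · simp only [q, Pi.add_apply, Finset.sum_add_distrib, Finset.sum_pi_single', Finset.mem_univ,
        if_true]
      ring
    · simp only [hqi, hqj]
      exact pairGap_one_add_one_sub t
  · rintro _ ⟨p, ⟨hpos, hsum, hmax, rfl⟩, rfl⟩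
    have hpair : p i + p j ≤ 1 := by
      rw [← Finset.sum_pair hij, ← hsum]
      exact Finset.sum_le_sum_of_subset_of_nonneg (Finset.subset_univ _) fun k _ _ => hpos k
    rw [← pairGap_one_add_one_sub]
    exact pairGap_le_of_add_le_one (hpos j) (hmax j) hpair

/-- The minimum, over probability vectors `p` in the `K`-simplex such that
`p i` is the maximal coordinate, `i ≠ j`, and `p i - p j = t`, of
`-(p i + p j) log((p i + p j)/2) + p i log (p i) + p j log (p j)`
equals `(1+t)/2 · log(1+t) + (1-t)/2 · log(1-t)`
(convention `0 log 0 = 0`, i.e. Mathlib's `Real.log 0 = 0`). -/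
theorem min_transform_eq (K : ℕ) (hK : 2 ≤ K) (i j : Fin K) (hij : i ≠ j)
    (t : ℝ) (ht0 : 0 ≤ t) (ht1 : t ≤ 1) :
    IsLeast
      ((fun p : Fin K → ℝ =>
          -(p i + p j) * Real.log ((p i + p j) / 2)
            + p i * Real.log (p i) + p j * Real.log (p j)) ''
        {p : Fin K → ℝ | (∀ k, 0 ≤ p k) ∧ ∑ k, p k = 1 ∧ (∀ k, p k ≤ p i) ∧ p i - p j = t})
      ((1 + t) / 2 * Real.log (1 + t) + (1 - t) / 2 * Real.log (1 - t)) :=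
  min_transform_eq_general K i j hij t ht0 ht1
end

section
/- Let p be a probability vector in the K-simplex with unique maximizer y_{max}, and let \hat{y} \ne y_{max}. Then the infimum of \sum_{y=1}^K p_y(-h_y + \log \sum_j \exp(h_j)) over h \in \mathbb{R}^K subject to h_{\hat{y}} \ge h_i for all i is at least -(p_{y_{max}} + p_{\hat{y}})\log((p_{y_{max}} + p_{\hat{y}})/2) - \sum_{y \notin \{y_{max},\hat{y}\}} p_y \log p_y. -/
/-- Let `p` be a probability vector in the `K`-simplex with positive entries and unique
maximizer `ymax`, and let `yhat ≠ ymax`. Then the conditional logistic risk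
`∑_y p_y (-h_y + log ∑_j exp h_j)` of any score vector `h` predicting `yhat`
(i.e. `h yhat ≥ h i` for all `i`) is at least
`-(p ymax + p yhat) log((p ymax + p yhat)/2) - ∑_{y ∉ {ymax, yhat}} p_y log p_y`. -/
theorem conditional_logistic_risk_lower_bound (K : ℕ) (hK : 2 ≤ K) (p : Fin K → ℝ)
    (hp : ∀ y, 0 < p y) (hsum : ∑ y, p y = 1)
    (ymax yhat : Fin K) (hne : yhat ≠ ymax)
    (hmax : ∀ y, y ≠ ymax → p y < p ymax)
    (h : Fin K → ℝ) (hpred : ∀ i, h i ≤ h yhat) :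
    -(p ymax + p yhat) * Real.log ((p ymax + p yhat) / 2)
        - ∑ y ∈ Finset.univ \ {ymax, yhat}, p y * Real.log (p y)
      ≤ ∑ y, p y * (-(h y) + Real.log (∑ j, Real.exp (h j))) := by
  have hne' : ymax ≠ yhat := fun e => hne e.symm
  set S := ∑ j, Real.exp (h j) with hS
  have hSpos : 0 < S :=
    Finset.sum_pos (fun j _ => Real.exp_pos _) ⟨ymax, Finset.mem_univ _⟩
  set L := Real.log S with hL
  set q : Fin K → ℝ := fun y => Real.exp (h y) / S with hq
  have hqpos : ∀ y, 0 < q y := fun y => div_pos (Real.exp_pos _) hSpos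
  have hqsum : ∑ y, q y = 1 := by
    simp only [hq, ← Finset.sum_div]
    rw [← hS, div_self hSpos.ne']
  have hlogq : ∀ y, Real.log (q y) = h y - L := by
    intro y
    rw [hq]
    rw [Real.log_div (Real.exp_pos _).ne' hSpos.ne', Real.log_exp]
  set s := p ymax + p yhat with hs
  have hspos : 0 < s := add_pos (hp _) (hp _)
  set p' : Fin K → ℝ := fun y => if y = ymax ∨ y = yhat then s / 2 else p y with hp'
  have hp'pos : ∀ y, 0 < p' y := by
    intro y
    rw [hp']
    dsimp only
    split
    · linarith
    · exact hp y
  have hsplit : ∀ f : Fin K → ℝ,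
      ∑ y, f y = f ymax + f yhat + ∑ y ∈ Finset.univ \ {ymax, yhat}, f y := by
    intro f
    rw [← Finset.sum_sdiff (Finset.subset_univ ({ymax, yhat} : Finset (Fin K))),
      Finset.sum_pair hne']
    ring
  have hrest : ∀ y ∈ Finset.univ \ ({ymax, yhat} : Finset (Fin K)), p' y = p y := by
    intro y hy
    simp only [Finset.mem_sdiff, Finset.mem_insert, Finset.mem_singleton] at hy
    rw [hp']
    dsimp only
    rw [if_neg (by tauto)]
  have hp'sum : ∑ y, p' y = 1 := by
    rw [hsplit p', hsplit p] at *
    rw [Finset.sum_congr rfl hrest]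
    have h1 : p' ymax = s / 2 := by rw [hp']; simp
    have h2 : p' yhat = s / 2 := by rw [hp']; simp
    rw [h1, h2]
    linarith [hsum]
  -- Step 2: ∑ p log q ≤ ∑ p' log q
  have step2 : ∑ y, p y * Real.log (q y) ≤ ∑ y, p' y * Real.log (q y) := by
    rw [hsplit (fun y => p y * Real.log (q y)), hsplit (fun y => p' y * Real.log (q y))]
    have hrest2 : ∑ y ∈ Finset.univ \ ({ymax, yhat} : Finset (Fin K)),
        p' y * Real.log (q y) = ∑ y ∈ Finset.univ \ ({ymax, yhat} : Finset (Fin K)),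
        p y * Real.log (q y) := Finset.sum_congr rfl (fun y hy => by rw [hrest y hy])
    rw [hrest2]
    have h1 : p' ymax = s / 2 := by rw [hp']; simp
    have h2 : p' yhat = s / 2 := by rw [hp']; simp
    rw [h1, h2]
    have hqle : Real.log (q ymax) ≤ Real.log (q yhat) := by
      rw [hlogq, hlogq]; linarith [hpred ymax]
    have hple : p yhat < p ymax := hmax yhat hne
    nlinarith [hqle, hple]
  -- Step 3: Gibbs: ∑ p' log q ≤ ∑ p' log p'
  have step3 : ∑ y, p' y * Real.log (q y) ≤ ∑ y, p' y * Real.log (p' y) := by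
    have key : ∑ y, (p' y * Real.log (q y) - p' y * Real.log (p' y)) ≤ 0 := by
      have : ∀ y ∈ Finset.univ, p' y * Real.log (q y) - p' y * Real.log (p' y)
          ≤ q y - p' y := by
        intro y _
        have hpos : 0 < q y / p' y := div_pos (hqpos y) (hp'pos y)
        have hlog := Real.log_le_sub_one_of_pos hpos
        rw [Real.log_div (hqpos y).ne' (hp'pos y).ne'] at hlog
        have := mul_le_mul_of_nonneg_left hlog (hp'pos y).le
        have hc : p' y * (q y / p' y) = q y := mul_div_cancel₀ _ (hp'pos y).ne'
        rw [mul_sub, mul_sub, hc, mul_one] at this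
        linarith
      calc ∑ y, (p' y * Real.log (q y) - p' y * Real.log (p' y))
          ≤ ∑ y, (q y - p' y) := Finset.sum_le_sum this
        _ = 0 := by rw [Finset.sum_sub_distrib, hqsum, hp'sum]; ring
    rw [Finset.sum_sub_distrib] at key
    linarith
  -- Step 4: compute ∑ p' log p'
  have step4 : ∑ y, p' y * Real.log (p' y)
      = s * Real.log (s / 2)
        + ∑ y ∈ Finset.univ \ ({ymax, yhat} : Finset (Fin K)), p y * Real.log (p y) := by
    rw [hsplit (fun y => p' y * Real.log (p' y))]
    have h1 : p' ymax = s / 2 := by rw [hp']; simp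
    have h2 : p' yhat = s / 2 := by rw [hp']; simp
    have hrest3 : ∑ y ∈ Finset.univ \ ({ymax, yhat} : Finset (Fin K)),
        p' y * Real.log (p' y) = ∑ y ∈ Finset.univ \ ({ymax, yhat} : Finset (Fin K)),
        p y * Real.log (p y) := Finset.sum_congr rfl (fun y hy => by rw [hrest y hy])
    rw [hrest3, h1, h2]
    ring
  -- Final assembly
  have hrisk : ∑ y, p y * (-(h y) + L) = -∑ y, p y * Real.log (q y) := by
    rw [← Finset.sum_neg_distrib]
    apply Finset.sum_congr rfl
    intro y _
    rw [hlogq]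
    ring
  rw [hrisk]
  have := step2.trans step3
  rw [step4] at this
  linarith
end

section
/- Suppose for each fixed x and all h \in H, \Delta C_{\ell_2}(h,x) \cdot 1[\Delta C_{\ell_2}(h,x) > \epsilon] \le s(\Delta C_{\ell_1}(h,x)) where s: \mathbb{R}_+ \to \mathbb{R} is concave. Then for all h \in H, R_{\ell_2}(h) - R^*_{\ell_2,H} + M_{\ell_2,H} \le s(R_{\ell_1}(h) - R^*_{\ell_1,H} + M_{\ell_1,H}) + \epsilon. -/
/-!
Since `R*` cancels, the two sides of the claim are `E[ΔC₂(h,·)]` and `s(E[ΔC₁(h,·)]) + ε`, and the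
hypothesis gives `ΔC₂(h,x) - ε ≤ s(ΔC₁(h,x))` pointwise, so this is Jensen's inequality for the
concave `s`. To avoid assuming `s ∘ ΔC₁` integrable, `s` is bounded by its supporting line at the
mean `E[ΔC₁(h,·)]`; when that mean is the endpoint `0` of the domain, `ΔC₁(h,·) = 0` a.e. instead.
-/

open MeasureTheory Set

namespace ConvexOn

variable {S : Set ℝ} {f : ℝ → ℝ} {x y : ℝ}

theorem add_rightDeriv_mul_sub_le (hf : ConvexOn ℝ S f) (hx : x ∈ interior S) (hy : y ∈ S) :
    f x + derivWithin f (Ioi x) x * (y - x) ≤ f y := by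
  rcases lt_trichotomy y x with hyx | rfl | hxy
  · have hslope := (hf.slope_le_leftDeriv_of_mem_interior hy hx hyx).trans
      (hf.leftDeriv_le_rightDeriv_of_mem_interior hx)
    rw [slope_def_field, div_le_iff₀ (sub_pos.2 hyx)] at hslope
    linarith
  · simp
  · have hslope := hf.rightDeriv_le_slope_of_mem_interior hx hy hxy
    rw [slope_def_field, le_div_iff₀ (sub_pos.2 hxy)] at hslope
    linarith

end ConvexOn

theorem ConcaveOn.exists_le_add_mul_sub {S : Set ℝ} {f : ℝ → ℝ} {x : ℝ} (hf : ConcaveOn ℝ S f)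
    (hx : x ∈ interior S) : ∃ c, ∀ y ∈ S, f y ≤ f x + c * (y - x) :=
  ⟨-derivWithin (-f) (Ioi x) x, fun y hy => by
    have := hf.neg.add_rightDeriv_mul_sub_le hx hy
    simp only [Pi.neg_apply] at this
    linarith⟩

theorem ConcaveOn.integral_le_of_le_comp {X : Type*} [MeasurableSpace X] {μ : Measure X}
    [IsProbabilityMeasure μ] {s : ℝ → ℝ} {a : ℝ} (hs : ConcaveOn ℝ (Ici a) s) {f g : X → ℝ}
    (hf : Integrable f μ) (hg : Integrable g μ) (hga : ∀ᵐ x ∂μ, a ≤ g x)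
    (hfg : ∀ᵐ x ∂μ, f x ≤ s (g x)) : ∫ x, f x ∂μ ≤ s (∫ x, g x ∂μ) := by
  have hmean : a ≤ ∫ x, g x ∂μ := by
    simpa using integral_mono_ae (integrable_const a) hg hga
  rcases hmean.eq_or_lt with hmean | hmean
  · have hg_eq : g =ᵐ[μ] fun _ => a := by
      have hdev : ∫ x, g x - a ∂μ = 0 := by
        rw [integral_sub hg (integrable_const a)]
        simp [← hmean]
      have hdev_ae := (integral_eq_zero_iff_of_nonneg_ae (hga.mono fun x hx => sub_nonneg.2 hx)
        (hg.sub (integrable_const a))).1 hdev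
      filter_upwards [hdev_ae] with x hx
      simpa [sub_eq_zero] using hx
    rw [← hmean]
    simpa using integral_mono_ae hf (integrable_const (s a))
      (by filter_upwards [hfg, hg_eq] with x hfx hgx; rwa [hgx] at hfx)
  · obtain ⟨c, hc⟩ := hs.exists_le_add_mul_sub (x := ∫ x, g x ∂μ) (by simpa using hmean)
    set m := ∫ x, g x ∂μ
    have hdev : Integrable (fun x => c * (g x - m)) μ :=
      (hg.sub (integrable_const m)).const_mul c
    calc ∫ x, f x ∂μ ≤ ∫ x, s m + c * (g x - m) ∂μ :=
          integral_mono_ae hf ((integrable_const _).add hdev) (by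
            filter_upwards [hfg, hga] with x hfx hgx using hfx.trans (hc _ hgx))
      _ = s m := by
          rw [integral_add (integrable_const _) hdev,
            integral_const_mul, integral_sub hg (integrable_const m)]
          simp [m]

theorem le_add_of_ite_lt_le {ε u v : ℝ} (hε : 0 ≤ ε) (h : (if ε < u then u else 0) ≤ v) :
    u ≤ v + ε := by
  split_ifs at h with hu
  · linarith
  · linarith [not_lt.1 hu]

/-- `ι` indexes the hypothesis set and `C₁ h x`, `C₂ h x` are the conditional risks of `ℓ₁`, `ℓ₂`. -/
theorem distribution_dependent_concave_bound_general
    {X ι : Type*} [MeasurableSpace X] (μ : Measure X) [IsProbabilityMeasure μ]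
    (C₁ C₂ : ι → X → ℝ) (s : ℝ → ℝ) (ε : ℝ) (hε : 0 ≤ ε)
    (hs_ccv : ConcaveOn ℝ (Set.Ici 0) s)
    (hbdd₁ : ∀ x, BddBelow (Set.range fun h => C₁ h x))
    (hint₁ : ∀ h, Integrable (fun x => C₁ h x) μ)
    (hint₂ : ∀ h, Integrable (fun x => C₂ h x) μ)
    (hinf₁ : Integrable (fun x => ⨅ h, C₁ h x) μ)
    (hinf₂ : Integrable (fun x => ⨅ h, C₂ h x) μ)
    (hmain : ∀ h x,
      (if ε < C₂ h x - ⨅ h', C₂ h' x then C₂ h x - ⨅ h', C₂ h' x else 0)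
        ≤ s (C₁ h x - ⨅ h', C₁ h' x)) :
    ∀ h : ι,
      (∫ x, C₂ h x ∂μ) - (⨅ h', ∫ x, C₂ h' x ∂μ)
          + ((⨅ h', ∫ x, C₂ h' x ∂μ) - ∫ x, (⨅ h', C₂ h' x) ∂μ)
        ≤ s ((∫ x, C₁ h x ∂μ) - (⨅ h', ∫ x, C₁ h' x ∂μ)
            + ((⨅ h', ∫ x, C₁ h' x ∂μ) - ∫ x, (⨅ h', C₁ h' x) ∂μ)) + ε := by
  intro h
  have hΔ₂ : Integrable (fun x => C₂ h x - ⨅ h', C₂ h' x) μ := (hint₂ h).sub hinf₂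
  have hjensen : ∫ x, (C₂ h x - ⨅ h', C₂ h' x) - ε ∂μ ≤ s (∫ x, C₁ h x - ⨅ h', C₁ h' x ∂μ) :=
    hs_ccv.integral_le_of_le_comp (hΔ₂.sub (integrable_const ε))
      ((hint₁ h).sub hinf₁) (ae_of_all _ fun x => sub_nonneg.2 (ciInf_le (hbdd₁ x) h))
      (ae_of_all _ fun x => sub_le_iff_le_add.2 (le_add_of_ite_lt_le hε (hmain h x)))
  rw [integral_sub hΔ₂ (integrable_const ε), integral_sub (hint₂ h) hinf₂,
    integral_sub (hint₁ h) hinf₁, integral_const, probReal_univ, one_smul] at hjensen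
  rw [sub_add_sub_cancel, sub_add_sub_cancel]
  linarith

/-- Distribution-dependent concave `H`-consistency bound.  Here `ι` indexes the hypothesis
set `H`, `C₁ C₂ : ι → X → ℝ` are the conditional risks of the surrogate loss `ℓ₁` and the
target loss `ℓ₂`, `R_ℓ(h) = ∫ C_ℓ(h,x) dμ`, `R*_ℓ = ⨅_h R_ℓ(h)` and
`M_ℓ = R*_ℓ - ∫ (⨅_h C_ℓ(h,x)) dμ`.  If `s : ℝ₊ → ℝ` is concave and for all `h, x` we
have `⟨ΔC₂(h,x)⟩_ε ≤ s(ΔC₁(h,x))` (with `⟨u⟩_ε = u·1[u>ε]`), then for all `h`,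
`R₂(h) - R*₂ + M₂ ≤ s(R₁(h) - R*₁ + M₁) + ε`. -/
theorem distribution_dependent_concave_bound
    {X ι : Type*} [MeasurableSpace X] (μ : Measure X) [IsProbabilityMeasure μ]
    [Nonempty ι]
    (C₁ C₂ : ι → X → ℝ) (s : ℝ → ℝ) (ε : ℝ) (hε : 0 ≤ ε)
    (hs_ccv : ConcaveOn ℝ (Set.Ici 0) s)
    (hbdd₁ : ∀ x, BddBelow (Set.range fun h => C₁ h x))
    (hbdd₂ : ∀ x, BddBelow (Set.range fun h => C₂ h x))
    (hint₁ : ∀ h, Integrable (fun x => C₁ h x) μ)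
    (hint₂ : ∀ h, Integrable (fun x => C₂ h x) μ)
    (hinf₁ : Integrable (fun x => ⨅ h, C₁ h x) μ)
    (hinf₂ : Integrable (fun x => ⨅ h, C₂ h x) μ)
    (hRbdd₁ : BddBelow (Set.range fun h => ∫ x, C₁ h x ∂μ))
    (hRbdd₂ : BddBelow (Set.range fun h => ∫ x, C₂ h x ∂μ))
    (hmain : ∀ h x,
      (if ε < C₂ h x - ⨅ h', C₂ h' x then C₂ h x - ⨅ h', C₂ h' x else 0)
        ≤ s (C₁ h x - ⨅ h', C₁ h' x)) :
    ∀ h : ι,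
      (∫ x, C₂ h x ∂μ) - (⨅ h', ∫ x, C₂ h' x ∂μ)
          + ((⨅ h', ∫ x, C₂ h' x ∂μ) - ∫ x, (⨅ h', C₂ h' x) ∂μ)
        ≤ s ((∫ x, C₁ h x ∂μ) - (⨅ h', ∫ x, C₁ h' x ∂μ)
            + ((⨅ h', ∫ x, C₁ h' x ∂μ) - ∫ x, (⨅ h', C₁ h' x) ∂μ)) + ε :=
  distribution_dependent_concave_bound_general μ C₁ C₂ s ε hε hs_ccv hbdd₁ hint₁ hint₂ hinf₁ hinf₂
    hmain
end

section
/- Let H be a class of functions X \to \mathbb{R}^K, \Pi_1(H) = \{(x,y) \mapsto h_y(x) : h \in H, y \in Y\}, and fix a labeled sample (x_1,y_1),...,(x_m,y_m). Then E_\sigma[\frac{1}{m}\sup_{h\in H} \sum_{i=1}^m \sigma_i h_{y_i}(x_i)] \le K \cdot R_m(\Pi_1(H)), where R_m denotes Rademacher complexity. -/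
open Finset

private lemma sum_eps_zero {m : ℕ} (i : Fin m) :
    ∑ τ : Fin m → Bool, (if τ i then (1:ℝ) else -1) = 0 := by
  apply Finset.sum_ninvolution (fun τ => Function.update τ i (!(τ i)))
  · intro τ
    simp only [Function.update_self]
    cases τ i <;> norm_num
  · intro τ _ hc
    have := congrFun hc i
    simp at this
  · intro τ; exact Finset.mem_univ _
  · intro τ
    funext j
    by_cases hj : j = i
    · subst hj; simp
    · simp [Function.update_of_ne hj]

private lemma key_id {X : Type*} {K m : ℕ} (x : Fin m → X) (h : X → Fin K → ℝ) (k : Fin K)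
    (A : Finset (Fin m)) (σ : Fin m → Bool) :
    ∑ τ : Fin m → Bool, ∑ i, (if (if i ∈ A then σ i else τ i) then (1:ℝ) else -1) * h (x i) k
      = 2 ^ m * ∑ i ∈ A, (if σ i then (1:ℝ) else -1) * h (x i) k := by
  rw [Finset.sum_comm]
  have key : ∀ i : Fin m, ∑ τ : Fin m → Bool,
      (if (if i ∈ A then σ i else τ i) then (1:ℝ) else -1) * h (x i) k
      = if i ∈ A then 2 ^ m * ((if σ i then (1:ℝ) else -1) * h (x i) k) else 0 := by
    intro i
    by_cases hi : i ∈ A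
    · simp [hi, Finset.sum_const, mul_comm]
    · simp only [hi, if_false, ← Finset.sum_mul, sum_eps_zero, zero_mul]
  simp only [key]
  rw [Finset.sum_ite_mem, Finset.univ_inter, Finset.mul_sum]

private def combEquiv {m : ℕ} (A : Finset (Fin m)) :
    ((Fin m → Bool) × (Fin m → Bool)) ≃ ((Fin m → Bool) × (Fin m → Bool)) :=
  Function.Involutive.toPerm
    (fun p => (fun i => if i ∈ A then p.1 i else p.2 i, fun i => if i ∈ A then p.2 i else p.1 i))
    (by intro p; ext i <;> by_cases hi : i ∈ A <;> simp [hi])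

private lemma sum_combine {m : ℕ} (A : Finset (Fin m)) (f : (Fin m → Bool) → ℝ) :
    ∑ σ : Fin m → Bool, ∑ τ : Fin m → Bool, f (fun i => if i ∈ A then σ i else τ i)
      = 2 ^ m * ∑ σ : Fin m → Bool, f σ := by
  have h1 : ∑ p : (Fin m → Bool) × (Fin m → Bool), f (fun i => if i ∈ A then p.1 i else p.2 i)
      = ∑ p : (Fin m → Bool) × (Fin m → Bool), f p.1 :=
    Fintype.sum_equiv (combEquiv A) _ _ (fun p => rfl)
  calc ∑ σ : Fin m → Bool, ∑ τ : Fin m → Bool, f (fun i => if i ∈ A then σ i else τ i)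
      = ∑ p : (Fin m → Bool) × (Fin m → Bool), f (fun i => if i ∈ A then p.1 i else p.2 i) := by
        rw [← Finset.sum_product']; rfl
    _ = ∑ p : (Fin m → Bool) × (Fin m → Bool), f p.1 := h1
    _ = ∑ σ : Fin m → Bool, ∑ _τ : Fin m → Bool, f σ := by rw [← Finset.sum_product']; rfl
    _ = 2 ^ m * ∑ σ : Fin m → Bool, f σ := by
        simp [Finset.sum_const, mul_comm, Finset.mul_sum]

/-- For a class `H` of functions `X → ℝ^K` and a fixed labeled sample `(xᵢ, yᵢ)`,
`E_σ[(1/m) sup_{h∈H} ∑ᵢ σᵢ h_{yᵢ}(xᵢ)] ≤ K · R_m(Π₁(H))`, where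
`R_m(Π₁(H)) = E_σ[(1/m) sup_{h∈H, y} ∑ᵢ σᵢ h_y(xᵢ)]` is the Rademacher complexity of
`Π₁(H) = {(x,y) ↦ h_y(x)}`, and the expectation over `σ ∈ {-1,1}^m` is written as the
uniform average over `σ : Fin m → Bool`. -/
theorem rademacher_label_selection_bound {X : Type*} (K m : ℕ) [NeZero K] (hm : 0 < m)
    (x : Fin m → X) (yl : Fin m → Fin K)
    (H : Set (X → Fin K → ℝ)) (hH : H.Nonempty)
    (hbdd : ∀ σ : Fin m → Bool,
      BddAbove {r : ℝ | ∃ h ∈ H, ∃ y : Fin K,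
        r = (1 / m : ℝ) * ∑ i, (if σ i then (1 : ℝ) else -1) * h (x i) y}) :
    (1 / 2 ^ m : ℝ) * ∑ σ : Fin m → Bool,
        sSup ((fun h : X → Fin K → ℝ =>
          (1 / m : ℝ) * ∑ i, (if σ i then (1 : ℝ) else -1) * h (x i) (yl i)) '' H)
      ≤ K * ((1 / 2 ^ m : ℝ) * ∑ σ : Fin m → Bool,
          sSup {r : ℝ | ∃ h ∈ H, ∃ y : Fin K,
            r = (1 / m : ℝ) * ∑ i, (if σ i then (1 : ℝ) else -1) * h (x i) y}) := by
  classical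
  set S : (Fin m → Bool) → ℝ := fun σ => sSup {r : ℝ | ∃ h ∈ H, ∃ y : Fin K,
      r = (1 / m : ℝ) * ∑ i, (if σ i then (1 : ℝ) else -1) * h (x i) y} with hSdef
  -- Step 1: pointwise bound for partial sums
  have step1 : ∀ (A : Finset (Fin m)) (k : Fin K) (σ : Fin m → Bool) (h : X → Fin K → ℝ),
      h ∈ H →
      (1 / m : ℝ) * ∑ i ∈ A, (if σ i then (1:ℝ) else -1) * h (x i) k
        ≤ (1 / 2 ^ m : ℝ) * ∑ τ : Fin m → Bool, S (fun i => if i ∈ A then σ i else τ i) := by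
    intro A k σ h hh
    have e1 : ∀ τ : Fin m → Bool,
        (1 / m : ℝ) * ∑ i, (if (if i ∈ A then σ i else τ i) then (1:ℝ) else -1) * h (x i) k
          ≤ S (fun i => if i ∈ A then σ i else τ i) := fun τ =>
      le_csSup (hbdd _) ⟨h, hh, k, rfl⟩
    have e2 : (1 / m : ℝ) * ∑ i ∈ A, (if σ i then (1:ℝ) else -1) * h (x i) k
        = (1 / 2 ^ m : ℝ) * ∑ τ : Fin m → Bool,
          (1 / m : ℝ) * ∑ i, (if (if i ∈ A then σ i else τ i) then (1:ℝ) else -1) * h (x i) k := by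
      rw [← Finset.mul_sum, key_id x h k A σ]
      have h2 : (2:ℝ) ^ m ≠ 0 := by positivity
      field_simp
    rw [e2]
    have := Finset.sum_le_sum (fun τ (_ : τ ∈ Finset.univ) => e1 τ)
    have hpos : (0:ℝ) ≤ 1 / 2 ^ m := by positivity
    exact mul_le_mul_of_nonneg_left this hpos
  -- partial-sum sets are bounded above
  have bddA : ∀ (A : Finset (Fin m)) (k : Fin K) (σ : Fin m → Bool),
      BddAbove ((fun h : X → Fin K → ℝ =>
        (1 / m : ℝ) * ∑ i ∈ A, (if σ i then (1:ℝ) else -1) * h (x i) k) '' H) := by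
    intro A k σ
    refine ⟨(1 / 2 ^ m : ℝ) * ∑ τ : Fin m → Bool, S (fun i => if i ∈ A then σ i else τ i), ?_⟩
    rintro r ⟨h, hh, rfl⟩
    exact step1 A k σ h hh
  -- Step 3: averaged partial sup bounded by averaged full sup
  have step3 : ∀ (A : Finset (Fin m)) (k : Fin K),
      ∑ σ : Fin m → Bool, sSup ((fun h : X → Fin K → ℝ =>
        (1 / m : ℝ) * ∑ i ∈ A, (if σ i then (1:ℝ) else -1) * h (x i) k) '' H)
        ≤ ∑ σ : Fin m → Bool, S σ := by
    intro A k
    have h1 : ∀ σ : Fin m → Bool, sSup ((fun h : X → Fin K → ℝ =>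
        (1 / m : ℝ) * ∑ i ∈ A, (if σ i then (1:ℝ) else -1) * h (x i) k) '' H)
        ≤ (1 / 2 ^ m : ℝ) * ∑ τ : Fin m → Bool, S (fun i => if i ∈ A then σ i else τ i) := by
      intro σ
      refine csSup_le (hH.image _) ?_
      rintro r ⟨h, hh, rfl⟩
      exact step1 A k σ h hh
    calc ∑ σ : Fin m → Bool, sSup ((fun h : X → Fin K → ℝ =>
          (1 / m : ℝ) * ∑ i ∈ A, (if σ i then (1:ℝ) else -1) * h (x i) k) '' H)
        ≤ ∑ σ : Fin m → Bool,
            (1 / 2 ^ m : ℝ) * ∑ τ : Fin m → Bool, S (fun i => if i ∈ A then σ i else τ i) :=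
          Finset.sum_le_sum (fun σ _ => h1 σ)
      _ = (1 / 2 ^ m : ℝ) * ∑ σ : Fin m → Bool, ∑ τ : Fin m → Bool,
            S (fun i => if i ∈ A then σ i else τ i) := by rw [Finset.mul_sum]
      _ = (1 / 2 ^ m : ℝ) * (2 ^ m * ∑ σ : Fin m → Bool, S σ) := by rw [sum_combine A S]
      _ = ∑ σ : Fin m → Bool, S σ := by
          have h2 : (2:ℝ) ^ m ≠ 0 := by positivity
          field_simp
  -- Step 4: per-σ decomposition into label fibers
  have step4 : ∀ σ : Fin m → Bool,
      sSup ((fun h : X → Fin K → ℝ =>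
        (1 / m : ℝ) * ∑ i, (if σ i then (1:ℝ) else -1) * h (x i) (yl i)) '' H)
      ≤ ∑ k : Fin K, sSup ((fun h : X → Fin K → ℝ =>
        (1 / m : ℝ) * ∑ i ∈ Finset.univ.filter (fun i => yl i = k),
          (if σ i then (1:ℝ) else -1) * h (x i) k) '' H) := by
    intro σ
    refine csSup_le (hH.image _) ?_
    rintro r ⟨h, hh, rfl⟩
    have dec : (1 / m : ℝ) * ∑ i, (if σ i then (1:ℝ) else -1) * h (x i) (yl i)
        = ∑ k : Fin K, (1 / m : ℝ) * ∑ i ∈ Finset.univ.filter (fun i => yl i = k),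
            (if σ i then (1:ℝ) else -1) * h (x i) k := by
      rw [← Finset.mul_sum]
      congr 1
      rw [← Finset.sum_fiberwise Finset.univ yl (fun i => (if σ i then (1:ℝ) else -1) * h (x i) (yl i))]
      refine Finset.sum_congr rfl (fun k _ => ?_)
      refine Finset.sum_congr rfl (fun i hi => ?_)
      rw [Finset.mem_filter] at hi
      rw [hi.2]
    dsimp only
    rw [dec]
    refine Finset.sum_le_sum (fun k _ => ?_)
    exact le_csSup (bddA _ k σ) ⟨h, hh, rfl⟩
  -- assemble
  have main : ∑ σ : Fin m → Bool, sSup ((fun h : X → Fin K → ℝ =>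
        (1 / m : ℝ) * ∑ i, (if σ i then (1:ℝ) else -1) * h (x i) (yl i)) '' H)
      ≤ K * ∑ σ : Fin m → Bool, S σ := by
    calc ∑ σ : Fin m → Bool, sSup ((fun h : X → Fin K → ℝ =>
          (1 / m : ℝ) * ∑ i, (if σ i then (1:ℝ) else -1) * h (x i) (yl i)) '' H)
        ≤ ∑ σ : Fin m → Bool, ∑ k : Fin K, sSup ((fun h : X → Fin K → ℝ =>
            (1 / m : ℝ) * ∑ i ∈ Finset.univ.filter (fun i => yl i = k),
              (if σ i then (1:ℝ) else -1) * h (x i) k) '' H) :=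
          Finset.sum_le_sum (fun σ _ => step4 σ)
      _ = ∑ k : Fin K, ∑ σ : Fin m → Bool, sSup ((fun h : X → Fin K → ℝ =>
            (1 / m : ℝ) * ∑ i ∈ Finset.univ.filter (fun i => yl i = k),
              (if σ i then (1:ℝ) else -1) * h (x i) k) '' H) := Finset.sum_comm
      _ ≤ ∑ _k : Fin K, ∑ σ : Fin m → Bool, S σ :=
          Finset.sum_le_sum (fun k _ => step3 _ k)
      _ = K * ∑ σ : Fin m → Bool, S σ := by
          simp [Finset.sum_const]
  have hpos : (0:ℝ) ≤ 1 / 2 ^ m := by positivity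
  calc (1 / 2 ^ m : ℝ) * ∑ σ : Fin m → Bool, sSup ((fun h : X → Fin K → ℝ =>
        (1 / m : ℝ) * ∑ i, (if σ i then (1:ℝ) else -1) * h (x i) (yl i)) '' H)
      ≤ (1 / 2 ^ m : ℝ) * (K * ∑ σ : Fin m → Bool, S σ) :=
        mul_le_mul_of_nonneg_left main hpos
    _ = K * ((1 / 2 ^ m : ℝ) * ∑ σ : Fin m → Bool, S σ) := by ring
end
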